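/- arXiv:0708.3557 — 2 statements merged into one kernel-verified Lean document; each statement's English description precedes it below -/
import Mathlib

section
/- Let u be the multiplicative function defined by u = μ^(e) * λ * E₂ (Dirichlet convolutions), where λ is the Liouville function and E₂ is the characteristic function of perfect squares. Then u(p) = u(p²) = u(p³) = u(p⁴) = 0 for every prime p, and |u(p^b)| < b² for every prime power p^b with b ≥ 5. -/
open Nat ArithmeticFunction Finset
open scoped Classical

/-- `μ^(e)` as an arithmetic function. -/
noncomputable def muE : ArithmeticFunction ℤ :=
  ⟨fun n => if n = 0 then 0 else ∏ p ∈ n.primeFactors, moebius (n.factorization p),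
    by simp⟩

/-- The Liouville function `λ(n) = (-1)^{Ω(n)}`. -/
noncomputable def lam : ArithmeticFunction ℤ :=
  ⟨fun n => if n = 0 then 0 else (-1) ^ cardFactors n, by simp⟩

/-- The characteristic function of perfect squares. -/
noncomputable def E2 : ArithmeticFunction ℤ :=
  ⟨fun n => if n ≠ 0 ∧ IsSquare n then 1 else 0, by simp⟩

/-!
Work with Euler factors at `p`, i.e. power series in `x = p^{-s}`. Those of `λ` and `E₂` are
`1 / (1 + x)` and `1 / (1 - x²)`, while that of `μ^(e)` is `1 + ∑_{k ≥ 1} μ(k) xᵏ`, whose first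
five coefficients `1, 1, -1, -1, 0` are those of `(1 + x)(1 - x²)`. Hence the Euler factor of `u` is
`1 + O(x⁵)`. For larger exponents, all coefficients of the three factors lie in `[-1, 1]`, so
`|u(p^b)| ≤ ∑_{i ≤ b} (i + 1) = (b + 1)(b + 2) / 2 < b²` once `b ≥ 5`.
-/

open PowerSeries

theorem ArithmeticFunction.mul_apply_prime_pow {R : Type*} [Semiring R]
    (f g : ArithmeticFunction R) {p : ℕ} (hp : p.Prime) (n : ℕ) :
    (f * g) (p ^ n) = ∑ x ∈ antidiagonal n, f (p ^ x.1) * g (p ^ x.2) := by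
  rw [mul_apply, Nat.sum_divisorsAntidiagonal (fun a b => f a * g b), sum_divisors_prime_pow hp,
    Nat.sum_antidiagonal_eq_sum_range_succ_mk]
  refine sum_congr rfl fun i hi => ?_
  rw [Nat.pow_div (Nat.lt_succ_iff.mp (mem_range.mp hi)) hp.pos]

/-- The Euler factor at `p` of the Dirichlet series of `f`, as a power series in `p^{-s}`. -/
noncomputable def localFactor {R : Type*} [Semiring R] (f : ArithmeticFunction R) (p : ℕ) :
    R⟦X⟧ :=
  PowerSeries.mk fun i => f (p ^ i)

section LocalFactor

variable {R : Type*} [Semiring R]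

@[simp]
theorem coeff_localFactor (f : ArithmeticFunction R) (p i : ℕ) :
    coeff i (localFactor f p) = f (p ^ i) :=
  coeff_mk _ _

theorem localFactor_mul {p : ℕ} (hp : p.Prime) (f g : ArithmeticFunction R) :
    localFactor (f * g) p = localFactor f p * localFactor g p := by
  ext n
  simp [coeff_mul, mul_apply_prime_pow f g hp]

end LocalFactor

theorem isSquare_prime_pow_iff {p : ℕ} (hp : p.Prime) {i : ℕ} : IsSquare (p ^ i) ↔ Even i := by
  refine ⟨fun ⟨r, hr⟩ => ?_, fun h => h.isSquare_pow p⟩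
  have hr0 : r ≠ 0 := by rintro rfl; simp [hp.ne_zero] at hr
  have hfac := congrArg (fun n => n.factorization p) hr
  simp only [Nat.factorization_pow, Finsupp.smul_apply, hp.factorization_self,
    Nat.factorization_mul hr0 hr0, Finsupp.add_apply, smul_eq_mul, mul_one] at hfac
  exact ⟨_, hfac⟩

theorem localFactor_muE {p : ℕ} (hp : p.Prime) :
    localFactor muE p = PowerSeries.mk fun i => if i = 0 then 1 else moebius i := by
  ext i
  rw [coeff_localFactor, coeff_mk]
  split_ifs with hi
  · simp [muE, hi]
  · simp [muE, hp.ne_zero, Nat.primeFactors_prime_pow hi hp, hp.factorization_self]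

theorem localFactor_lam {p : ℕ} (hp : p.Prime) :
    localFactor lam p = PowerSeries.mk fun i => (-1) ^ i := by
  ext i
  rw [coeff_localFactor, coeff_mk]
  simp [lam, hp.ne_zero, cardFactors_apply_prime_pow hp]

theorem localFactor_E2 {p : ℕ} (hp : p.Prime) :
    localFactor E2 p = PowerSeries.mk fun i => if Even i then 1 else 0 := by
  ext i
  rw [coeff_localFactor, coeff_mk]
  simp [E2, hp.ne_zero, isSquare_prime_pow_iff hp]

section Coefficients

variable {R : Type*} [CommRing R]

theorem mk_neg_one_pow_mul_one_add_X :
    (PowerSeries.mk fun i => (-1 : R) ^ i) * (1 + X) = 1 := by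
  simpa [rescale_mk, sub_eq_add_neg] using
    congrArg (rescale (-1 : R)) (mk_one_mul_one_sub_eq_one (S := R))

theorem mk_even_indicator_mul_one_sub_X_sq :
    (PowerSeries.mk fun i => if Even i then (1 : R) else 0) * (1 - X ^ 2) = 1 := by
  ext (_ | _ | n)
  · simp
  · simp [mul_sub, coeff_mul_X_pow']
  · simp [mul_sub, coeff_mul_X_pow', Nat.even_add_one]

theorem coeff_eq_zero_of_X_pow_dvd_sub_one {F : R⟦X⟧} {n b : ℕ}
    (h : X ^ n ∣ F - 1) (hb0 : b ≠ 0) (hbn : b < n) : coeff b F = 0 := by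
  simpa [coeff_one, hb0, sub_eq_zero] using (X_pow_dvd_iff.mp h) b hbn

theorem two_mul_sum_antidiagonal_fst_add_one (n : ℕ) :
    2 * ∑ x ∈ antidiagonal n, ((x.1 : R) + 1) = (n + 1) * (n + 2) := by
  induction n with
  | zero => simp
  | succ n ih =>
    rw [Nat.sum_antidiagonal_succ', mul_add, ih]
    push_cast
    ring

variable [LinearOrder R] [IsOrderedRing R]

theorem abs_coeff_mul_le {F G : R⟦X⟧} {a b : ℕ → R} (hF : ∀ i, |coeff i F| ≤ a i)
    (hG : ∀ j, |coeff j G| ≤ b j) (n : ℕ) :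
    |coeff n (F * G)| ≤ ∑ x ∈ antidiagonal n, a x.1 * b x.2 := by
  rw [coeff_mul]
  refine (abs_sum_le_sum_abs _ _).trans (sum_le_sum fun x _ => ?_)
  rw [abs_mul]
  exact mul_le_mul (hF _) (hG _) (abs_nonneg _) ((abs_nonneg _).trans (hF _))

theorem two_mul_abs_coeff_mul_mul_le {F G H : R⟦X⟧} (hF : ∀ i, |coeff i F| ≤ 1)
    (hG : ∀ i, |coeff i G| ≤ 1) (hH : ∀ i, |coeff i H| ≤ 1) (n : ℕ) :
    2 * |coeff n (F * G * H)| ≤ (n + 1) * (n + 2) := by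
  have hFG (i : ℕ) : |coeff i (F * G)| ≤ i + 1 := (abs_coeff_mul_le hF hG i).trans_eq (by simp)
  calc 2 * |coeff n (F * G * H)|
      ≤ 2 * ∑ x ∈ antidiagonal n, ((x.1 : R) + 1) * 1 :=
        mul_le_mul_of_nonneg_left (abs_coeff_mul_le hFG hH n) zero_le_two
    _ = (n + 1) * (n + 2) := by simp_rw [mul_one]; exact two_mul_sum_antidiagonal_fst_add_one n

end Coefficients

theorem X_pow_five_dvd_mk_moebius_sub :
    X ^ 5 ∣ (PowerSeries.mk fun i => if i = 0 then (1 : ℤ) else moebius i) -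
      (1 + X) * (1 - X ^ 2) := by
  have h2 : moebius 2 = -1 := moebius_apply_prime Nat.prime_two
  have h3 : moebius 3 = -1 := moebius_apply_prime Nat.prime_three
  have h4 : moebius 4 = 0 := by decide
  rw [X_pow_dvd_iff]
  intro d hd
  interval_cases d <;> simp [mul_sub, add_mul, coeff_X_pow, coeff_X, h2, h3, h4]

theorem X_pow_five_dvd_localFactor_sub_one {p : ℕ} (hp : p.Prime) :
    X ^ 5 ∣ localFactor (muE * lam * E2) p - 1 := by
  rw [localFactor_mul hp, localFactor_mul hp, localFactor_muE hp, localFactor_lam hp,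
    localFactor_E2 hp]
  set L : ℤ⟦X⟧ := PowerSeries.mk fun i => (-1) ^ i
  set E : ℤ⟦X⟧ := PowerSeries.mk fun i => if Even i then 1 else 0
  convert dvd_mul_of_dvd_left X_pow_five_dvd_mk_moebius_sub (L * E) using 1
  linear_combination (1 - X ^ 2) * E * mk_neg_one_pow_mul_one_add_X (R := ℤ) +
    mk_even_indicator_mul_one_sub_X_sq (R := ℤ)

theorem two_mul_abs_apply_prime_pow_le {p : ℕ} (hp : p.Prime) (n : ℕ) :
    2 * |(muE * lam * E2) (p ^ n)| ≤ (n + 1) * (n + 2) := by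
  rw [← coeff_localFactor, localFactor_mul hp, localFactor_mul hp, localFactor_muE hp,
    localFactor_lam hp, localFactor_E2 hp]
  refine two_mul_abs_coeff_mul_mul_le (fun i => ?_) (by simp) (fun i => ?_) n <;>
    rw [coeff_mk] <;> split_ifs <;> simp [abs_moebius_le_one]

theorem u_prime_power_values (p : ℕ) (hp : p.Prime) :
    ((muE * lam * E2) p = 0 ∧ (muE * lam * E2) (p ^ 2) = 0 ∧
      (muE * lam * E2) (p ^ 3) = 0 ∧ (muE * lam * E2) (p ^ 4) = 0) ∧
      ∀ b : ℕ, 5 ≤ b → |(muE * lam * E2) (p ^ b)| < (b : ℤ) ^ 2 := by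
  have hvanish (b : ℕ) (hb0 : b ≠ 0) (hb5 : b < 5) : (muE * lam * E2) (p ^ b) = 0 := by
    rw [← coeff_localFactor]
    exact coeff_eq_zero_of_X_pow_dvd_sub_one (X_pow_five_dvd_localFactor_sub_one hp) hb0 hb5
  refine ⟨⟨by simpa using hvanish 1 one_ne_zero (by norm_num),
    hvanish 2 two_ne_zero (by norm_num), hvanish 3 three_ne_zero (by norm_num),
    hvanish 4 four_ne_zero (by norm_num)⟩, fun b hb => ?_⟩
  have hbound := two_mul_abs_apply_prime_pow_le hp b
  have hb5 : (5 : ℤ) ≤ b := by exact_mod_cast hb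
  nlinarith
end

section
/- The identity μ^(e) = μ² * μ₂ * u holds as Dirichlet convolutions, where μ₂(n) = μ(m) if n = m² and μ₂(n) = 0 otherwise, and u = μ^(e) * λ * E₂. -/
/-!
The Liouville function is completely multiplicative, so its Dirichlet inverse is `μ λ`, which
equals `μ²` because `λ = μ` on squarefree numbers. Moreover `μ₂` and `E₂` are the images of `μ`
and `ζ` under the dilation `f ↦ (n ↦ f(√n) on squares, 0 elsewhere)`, which is multiplicative
for Dirichlet convolution, so `μ₂ * E₂` is the dilation of `μ * ζ = 1`. Hence
`μ² * μ₂ * (μ^(e) * λ * E₂) = μ^(e) * (μ² * λ) * (μ₂ * E₂) = μ^(e)`.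
-/

open Nat ArithmeticFunction Finset
open scoped Classical

/-- `μ²(n) = μ(n)²`. -/
noncomputable def muSq : ArithmeticFunction ℤ :=
  ⟨fun n => (moebius n) ^ 2, by simp⟩

/-- `μ₂(n) = μ(m)` if `n = m²`, and `0` otherwise. -/
noncomputable def mu2 : ArithmeticFunction ℤ :=
  ⟨fun n => if IsSquare n then moebius (Nat.sqrt n) else 0, by simp⟩

open scoped ArithmeticFunction.Moebius ArithmeticFunction.zeta

namespace ArithmeticFunction

theorem pmul_moebius_mul_eq_one {R : Type*} [Ring R] {g : ArithmeticFunction R}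
    (h_one : g 1 = 1) (h_mul : ∀ m n, g (m * n) = g m * g n) :
    (μ : ArithmeticFunction R).pmul g * g = 1 := by
  ext n
  calc ((μ : ArithmeticFunction R).pmul g * g) n
      = ∑ x ∈ n.divisorsAntidiagonal, (μ : ArithmeticFunction R) x.1 * g n := by
        rw [mul_apply]
        refine sum_congr rfl fun x hx => ?_
        rw [pmul_apply, ← (mem_divisorsAntidiagonal.1 hx).1, h_mul, mul_assoc]
    _ = ((μ : ArithmeticFunction R) * ζ) n * g n := by
        rw [mul_apply, sum_mul]
        refine sum_congr rfl fun x hx => ?_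
        have hx₂ : x.2 ≠ 0 := (pos_of_mem_divisors (snd_mem_divisors_of_mem_antidiagonal hx)).ne'
        rw [natCoe_apply, zeta_apply, if_neg hx₂, cast_one, mul_one]
    _ = (1 : ArithmeticFunction R) n := by
        rw [coe_moebius_mul_coe_zeta, one_apply]
        split_ifs with hn
        · rw [hn, h_one, one_mul]
        · rw [zero_mul]

variable {R : Type*}

noncomputable def sqDilate [Zero R] (f : ArithmeticFunction R) : ArithmeticFunction R :=
  ⟨fun n => if IsSquare n then f (Nat.sqrt n) else 0, by simp⟩

theorem sqDilate_apply [Zero R] (f : ArithmeticFunction R) (n : ℕ) :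
    sqDilate f n = if IsSquare n then f (Nat.sqrt n) else 0 := rfl

theorem sqDilate_apply_mul_self [Zero R] (f : ArithmeticFunction R) (m : ℕ) :
    sqDilate f (m * m) = f m := by
  rw [sqDilate_apply, if_pos ⟨m, rfl⟩, Nat.sqrt_eq]

theorem sqDilate_one [Semiring R] : sqDilate (1 : ArithmeticFunction R) = 1 := by
  ext n
  by_cases hsq : IsSquare n
  · obtain ⟨m, rfl⟩ := hsq
    rw [sqDilate_apply_mul_self, one_apply, one_apply]
    simp only [mul_eq_one, and_self]
  · rw [sqDilate_apply, if_neg hsq, one_apply, if_neg (by rintro rfl; exact hsq ⟨1, rfl⟩)]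

theorem sqDilate_apply_mul_sqDilate_apply_of_not_isSquare [MulZeroClass R]
    (f g : ArithmeticFunction R) {a b : ℕ} (h : ¬(IsSquare a ∧ IsSquare b)) :
    sqDilate f a * sqDilate g b = 0 := by
  rw [sqDilate_apply, sqDilate_apply]
  split_ifs with ha hb
  exacts [absurd ⟨ha, hb⟩ h, mul_zero _, zero_mul _, zero_mul _]

theorem sqDilate_mul [Semiring R] (f g : ArithmeticFunction R) :
    sqDilate f * sqDilate g = sqDilate (f * g) := by
  ext n
  rw [mul_apply, sqDilate_apply]
  split_ifs with hsq
  · obtain ⟨m, rfl⟩ := hsq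
    rw [Nat.sqrt_eq, mul_apply]
    symm
    -- the divisor pairs of `m * m` made of two squares are exactly the squares of those of `m`
    refine sum_of_injOn (fun x => (x.1 * x.1, x.2 * x.2)) ?_ ?_ ?_ ?_
    · rintro ⟨a, b⟩ - ⟨c, d⟩ - h
      simpa only [Prod.mk.injEq, Nat.mul_self_inj] using h
    · rintro ⟨a, b⟩ hab
      rw [mem_coe, mem_divisorsAntidiagonal] at hab ⊢
      obtain ⟨rfl, hm⟩ := hab
      exact ⟨by ring, mul_ne_zero hm hm⟩
    · rintro ⟨a, b⟩ hab hnot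
      refine sqDilate_apply_mul_sqDilate_apply_of_not_isSquare f g ?_
      rintro ⟨⟨c, rfl⟩, ⟨d, rfl⟩⟩
      obtain ⟨hcd, hm⟩ := mem_divisorsAntidiagonal.1 hab
      have hcd' : c * d = m := Nat.mul_self_inj.1 (by rw [← hcd]; ring)
      have hm' : m ≠ 0 := by rintro rfl; exact hm rfl
      exact hnot ⟨(c, d), mem_divisorsAntidiagonal.2 ⟨hcd', hm'⟩, rfl⟩
    · rintro ⟨a, b⟩ -
      rw [sqDilate_apply_mul_self, sqDilate_apply_mul_self]
  · refine sum_eq_zero fun x hx => sqDilate_apply_mul_sqDilate_apply_of_not_isSquare f g ?_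
    rintro ⟨ha, hb⟩
    exact hsq ((mem_divisorsAntidiagonal.1 hx).1 ▸ ha.mul hb)

end ArithmeticFunction

theorem lam_mul (m n : ℕ) : lam (m * n) = lam m * lam n := by
  rcases eq_or_ne m 0 with rfl | hm
  · simp
  rcases eq_or_ne n 0 with rfl | hn
  · simp
  simp only [lam, coe_mk, if_neg hm, if_neg hn, if_neg (mul_ne_zero hm hn),
    cardFactors_mul hm hn, pow_add]

theorem muSq_eq_pmul_lam : muSq = (μ : ArithmeticFunction ℤ).pmul lam := by
  ext n
  rw [pmul_apply, muSq, coe_mk, sq]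
  by_cases hμ : μ n = 0
  · rw [hμ, zero_mul, zero_mul]
  · have hn : n ≠ 0 := by rintro rfl; exact hμ rfl
    rw [lam, coe_mk, if_neg hn,
      ← moebius_apply_of_squarefree (moebius_ne_zero_iff_squarefree.1 hμ)]

theorem muSq_mul_lam : muSq * lam = 1 := by
  rw [muSq_eq_pmul_lam]
  exact pmul_moebius_mul_eq_one (by simp [lam]) lam_mul

theorem mu2_eq_sqDilate_moebius : mu2 = sqDilate μ := rfl

theorem E2_eq_sqDilate_zeta : E2 = sqDilate (ζ : ArithmeticFunction ℤ) := by
  ext n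
  rw [sqDilate_apply, natCoe_apply, zeta_apply, E2, coe_mk]
  by_cases hsq : IsSquare n
  · obtain ⟨m, rfl⟩ := hsq
    simp [Nat.sqrt_eq]
  · simp [hsq]

theorem mu2_mul_E2 : mu2 * E2 = 1 := by
  rw [mu2_eq_sqDilate_moebius, E2_eq_sqDilate_zeta, sqDilate_mul, moebius_mul_coe_zeta,
    sqDilate_one]

theorem muE_eq_muSq_mul_mu2_mul_u :
    muE = muSq * mu2 * (muE * lam * E2) := by
  calc muE = muE * ((muSq * lam) * (mu2 * E2)) := by
        rw [muSq_mul_lam, mu2_mul_E2, mul_one, mul_one]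
    _ = muSq * mu2 * (muE * lam * E2) := by ring
end
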